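/- Let M = 2^{n_M} for a positive integer n_M. For every nonzero ν ∈ ℤ³ set a(ν) = (16/(M·4^{μ(ν)})) · ⌈M·4^{μ(ν)}/(16‖ν‖²)⌉. Then Σ_{μ=2}^{n_p+1} Σ_{ν ∈ B_μ} |a(ν) − 1/‖ν‖²| ≤ (4/M) · (7·2^{n_p+1} − 9 n_p − 11 − 3·2^{−n_p}). -/

import Mathlib

/-- The box `{ν ∈ ℤ³ : max(|ν₁|,|ν₂|,|ν₃|) ≤ c}` as a finset. -/
noncomputable def boxFin (c : ℤ) : Finset (Fin 3 → ℤ) :=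
  Fintype.piFinset fun _ => Finset.Icc (-c) c

/-- `B_μ`: the box of radius `2^{μ−1} − 1` minus the box of radius `2^{μ−2} − 1`. -/
noncomputable def BFin (μ : ℕ) : Finset (Fin 3 → ℤ) :=
  boxFin (2 ^ (μ - 1) - 1) \ boxFin (2 ^ (μ - 2) - 1)

/-- `μ(ν) = ⌊log₂ max(|ν₁|,|ν₂|,|ν₃|)⌋ + 2` for nonzero `ν ∈ ℤ³`. -/
def muIdx (ν : Fin 3 → ℤ) : ℕ :=
  Nat.log 2 (max (ν 0).natAbs (max (ν 1).natAbs (ν 2).natAbs)) + 2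

/-- The squared Euclidean norm `‖ν‖²` of an integer 3-vector, as a real number. -/
def normSq3 (ν : Fin 3 → ℤ) : ℝ := ∑ i, ((ν i : ℝ)) ^ 2

/-- The approximate coefficient
`a(ν) = (16/(M·4^{μ(ν)})) · ⌈M·4^{μ(ν)}/(16‖ν‖²)⌉`. -/
noncomputable def aCoeff (M : ℝ) (ν : Fin 3 → ℤ) : ℝ :=
  (16 / (M * 4 ^ muIdx ν)) * (⌈M * 4 ^ muIdx ν / (16 * normSq3 ν)⌉ : ℤ)

/-!
On the shell `B_μ` every `ν` has `μ(ν) = μ`, and `a(ν)` is `1/‖ν‖²` rounded up to a multiple of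
`16/(M·4^μ)`, so each term of the sum is at most `16/(M·4^μ)`. Since
`#B_μ = (2^μ − 1)³ − (2^{μ−1} − 1)³`, the whole sum is at most
`(16/M) Σ_{μ=2}^{n_p+1} ((2^μ − 1)³ − (2^{μ−1} − 1)³)/4^μ`, and this finite sum of geometric
terms evaluates to the stated closed form.
-/

open Finset

lemma mem_boxFin {c : ℤ} {ν : Fin 3 → ℤ} : ν ∈ boxFin c ↔ ∀ i, |ν i| ≤ c := by
  simp [boxFin, Fintype.mem_piFinset, abs_le, and_comm]

lemma boxFin_mono {c d : ℤ} (h : c ≤ d) : boxFin c ⊆ boxFin d := fun _ hν =>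
  mem_boxFin.2 fun i => (mem_boxFin.1 hν i).trans h

lemma card_boxFin {c : ℤ} (hc : 0 ≤ c) : ((boxFin c).card : ℝ) = (2 * c + 1) ^ 3 := by
  have hIcc : ((Icc (-c) c).card : ℤ) = 2 * c + 1 := by
    rw [Int.card_Icc, Int.toNat_of_nonneg (by omega)]
    ring
  rw [boxFin, Fintype.card_piFinset, prod_const, card_univ, Fintype.card_fin, Nat.cast_pow]
  exact_mod_cast congrArg (· ^ (3 : ℕ)) hIcc

lemma card_BFin {μ : ℕ} (hμ : 2 ≤ μ) :
    ((BFin μ).card : ℝ) = ((2 : ℝ) ^ μ - 1) ^ 3 - ((2 : ℝ) ^ (μ - 1) - 1) ^ 3 := by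
  obtain ⟨k, rfl⟩ := Nat.exists_eq_add_of_le' hμ
  have hk : (1 : ℤ) ≤ 2 ^ k := one_le_pow₀ (by norm_num)
  have hsub : boxFin (2 ^ k - 1) ⊆ boxFin (2 ^ (k + 1) - 1) :=
    boxFin_mono (by rw [pow_succ]; omega)
  simp only [BFin, Nat.add_sub_cancel, show k + 2 - 1 = k + 1 by omega]
  rw [card_sdiff_of_subset hsub, Nat.cast_sub (card_le_card hsub),
    card_boxFin (by rw [pow_succ]; omega), card_boxFin (by omega)]
  push_cast
  ring

lemma mem_boxFin_two_pow_sub_one {k : ℕ} {ν : Fin 3 → ℤ} :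
    ν ∈ boxFin (2 ^ k - 1) ↔ max (ν 0).natAbs (max (ν 1).natAbs (ν 2).natAbs) < 2 ^ k := by
  have hcoord (x : ℤ) : |x| ≤ 2 ^ k - 1 ↔ x.natAbs < 2 ^ k := by
    rw [Int.abs_eq_natAbs]; zify; omega
  simp [mem_boxFin, Fin.forall_fin_succ, hcoord]

lemma muIdx_eq_of_mem_BFin {μ : ℕ} (hμ : 2 ≤ μ) {ν : Fin 3 → ℤ} (hν : ν ∈ BFin μ) :
    muIdx ν = μ := by
  obtain ⟨hlt, hge⟩ := mem_sdiff.1 hν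
  rw [mem_boxFin_two_pow_sub_one] at hlt hge
  rw [muIdx, Nat.log_eq_of_pow_le_of_lt_pow (not_lt.1 hge)
    (by rwa [show μ - 2 + 1 = μ - 1 by omega])]
  omega

lemma abs_mul_ceil_div_sub_le {c : ℝ} (hc : 0 < c) (y : ℝ) : |c * ⌈y / c⌉ - y| ≤ c := by
  have hfactor : c * ⌈y / c⌉ - y = c * (⌈y / c⌉ - y / c) := by
    rw [mul_sub, mul_div_cancel₀ _ hc.ne']
  have hceil : |(⌈y / c⌉ : ℝ) - y / c| ≤ 1 := by
    rw [abs_of_nonneg (sub_nonneg.2 (Int.le_ceil _))]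
    linarith [Int.ceil_lt_add_one (y / c)]
  calc |c * ⌈y / c⌉ - y| = c * |(⌈y / c⌉ : ℝ) - y / c| := by
        rw [hfactor, abs_mul, abs_of_pos hc]
    _ ≤ c := mul_le_of_le_one_right hc.le hceil

lemma abs_aCoeff_sub_le {M : ℝ} (hM : 0 < M) (ν : Fin 3 → ℤ) :
    |aCoeff M ν - 1 / normSq3 ν| ≤ 16 / (M * 4 ^ muIdx ν) := by
  have hdiv : M * 4 ^ muIdx ν / (16 * normSq3 ν) = 1 / normSq3 ν / (16 / (M * 4 ^ muIdx ν)) := by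
    field_simp
  rw [aCoeff, hdiv]
  exact abs_mul_ceil_div_sub_le (by positivity) _

lemma sum_shell_card_div_four_pow (n : ℕ) :
    ∑ μ ∈ Icc 2 (n + 1), (((2 : ℝ) ^ μ - 1) ^ 3 - ((2 : ℝ) ^ (μ - 1) - 1) ^ 3) * (16 / 4 ^ μ)
      = 4 * (7 * 2 ^ (n + 1) - 9 * (n : ℝ) - 11 - 3 / 2 ^ n) := by
  induction n with
  | zero => norm_num
  | succ n ih =>
    rw [sum_Icc_succ_top (by omega), ih, Nat.add_sub_cancel]
    have h4 : (4 : ℝ) ^ (n + 1 + 1) = (2 ^ n) ^ 2 * 16 := by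
      rw [show (4 : ℝ) = 2 ^ 2 by norm_num, ← pow_mul, ← pow_mul]; ring
    rw [h4]
    field_simp
    push_cast
    ring

theorem stmt_2_general (n_p n_M : ℕ) :
    ∑ μ ∈ Finset.Icc 2 (n_p + 1), ∑ ν ∈ BFin μ,
        |aCoeff ((2 : ℝ) ^ n_M) ν - 1 / normSq3 ν|
      ≤ (4 / (2 : ℝ) ^ n_M) *
          (7 * 2 ^ (n_p + 1) - 9 * (n_p : ℝ) - 11 - 3 / 2 ^ n_p) := by
  set M : ℝ := 2 ^ n_M
  have hM : 0 < M := by positivity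
  calc ∑ μ ∈ Icc 2 (n_p + 1), ∑ ν ∈ BFin μ, |aCoeff M ν - 1 / normSq3 ν|
      ≤ ∑ μ ∈ Icc 2 (n_p + 1), ∑ _ν ∈ BFin μ, 16 / (M * 4 ^ μ) := by
        refine sum_le_sum fun μ hμ => sum_le_sum fun ν hν => ?_
        rw [← muIdx_eq_of_mem_BFin (mem_Icc.1 hμ).1 hν]
        exact abs_aCoeff_sub_le hM ν
    _ = (∑ μ ∈ Icc 2 (n_p + 1),
          (((2 : ℝ) ^ μ - 1) ^ 3 - ((2 : ℝ) ^ (μ - 1) - 1) ^ 3) * (16 / 4 ^ μ)) / M := by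
        rw [sum_div]
        refine sum_congr rfl fun μ hμ => ?_
        rw [sum_const, nsmul_eq_mul, card_BFin (mem_Icc.1 hμ).1]
        field_simp
    _ = 4 / M * (7 * 2 ^ (n_p + 1) - 9 * (n_p : ℝ) - 11 - 3 / 2 ^ n_p) := by
        rw [sum_shell_card_div_four_pow]
        ring

/-- Bound on the total coefficient error of the momentum-state preparation:
`Σ_{μ=2}^{n_p+1} Σ_{ν ∈ B_μ} |a(ν) − 1/‖ν‖²|
  ≤ (4/M)·(7·2^{n_p+1} − 9 n_p − 11 − 3·2^{−n_p})` with `M = 2^{n_M}`. -/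
theorem stmt_2 (n_p n_M : ℕ) (hp : 0 < n_p) (hM : 0 < n_M) :
    ∑ μ ∈ Finset.Icc 2 (n_p + 1), ∑ ν ∈ BFin μ,
        |aCoeff ((2 : ℝ) ^ n_M) ν - 1 / normSq3 ν|
      ≤ (4 / (2 : ℝ) ^ n_M) *
          (7 * 2 ^ (n_p + 1) - 9 * (n_p : ℝ) - 11 - 3 / 2 ^ n_p) :=
  stmt_2_general n_p n_M
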